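/- arXiv:2303.17843 — 4 statements merged into one kernel-verified Lean document; each statement's English description precedes it below -/
import Mathlib

section
/- Every finite-dimensional commutative division algebra over ℝ is isomorphic as an ℝ-algebra to ℝ or to ℂ. -/
theorem commutative_real_division_algebra_iso_real_or_complex
    (D : Type*) [DivisionRing D] [Algebra ℝ D] [FiniteDimensional ℝ D]
    (hcomm : ∀ x y : D, x * y = y * x) :
    Nonempty (D ≃ₐ[ℝ] ℝ) ∨ Nonempty (D ≃ₐ[ℝ] ℂ) := by
  letI : Field D :=
    { (inferInstance : DivisionRing D) with mul_comm := hcomm }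
  have halg : Algebra.IsAlgebraic ℝ D := Algebra.IsAlgebraic.of_finite ℝ D
  let f : D →ₐ[ℝ] ℂ := IsAlgClosed.lift
  have hinj : Function.Injective f := f.toRingHom.injective
  have hle : Module.finrank ℝ D ≤ 2 := by
    have := LinearMap.finrank_le_finrank_of_injective (f := f.toLinearMap) hinj
    simpa [Complex.finrank_real_complex] using this
  interval_cases h : Module.finrank ℝ D
  · exfalso
    have := Module.finrank_pos (R := ℝ) (M := D)
    omega
  · left
    have hbij : Function.Bijective (Algebra.ofId ℝ D) := by
      refine ⟨(Algebra.ofId ℝ D).toRingHom.injective, ?_⟩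
      have : Function.Injective (Algebra.ofId ℝ D).toLinearMap :=
        (Algebra.ofId ℝ D).toRingHom.injective
      exact (LinearMap.injective_iff_surjective_of_finrank_eq_finrank
        (by simp [h])).mp this
    exact ⟨(AlgEquiv.ofBijective (Algebra.ofId ℝ D) hbij).symm⟩
  · right
    have hbij : Function.Bijective f := by
      refine ⟨hinj, ?_⟩
      exact (LinearMap.injective_iff_surjective_of_finrank_eq_finrank
        (f := f.toLinearMap) (by simp [h, Complex.finrank_real_complex])).mp hinj
    exact ⟨AlgEquiv.ofBijective f hbij⟩
end

section
/- Let G be a finite group, A ≤ G a subgroup of index 2, and χ : G × G → ℂˣ a map satisfying the twisted bicocycle conditions χ(a, bc) = χ(a,b) · σ_b(χ(a,c)) and χ(ab, c) = σ_b(χ(a,c)) · χ(b,c), where σ_b is complex conjugation if b ∉ A and the identity if b ∈ A. Suppose the restriction of χ to A × A is a nondegenerate bicharacter. Then: (1) every element w ∈ G \ A satisfies w² = 1, so the extension A → G → ℤ/2ℤ splits; and (2) for every w ∈ G \ A and a ∈ A, w a w = a⁻¹. Hence G is a generalized dihedral group A ⋊ ℤ/2ℤ with ℤ/2ℤ acting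 by inversion. -/
/-!
For `c ∈ A` the twist in the first bicocycle identity is trivial, so `χ x` restricts to a character
of the finite group `A` and takes values of modulus one there. For `w ∉ A` the second identity gives
`χ (w * w) c = conj (χ w c) * χ w c = ‖χ w c‖ ^ 2 = 1` on `A`, and nondegeneracy forces `w * w = 1`.
If `a ∈ A` then `w * a ∉ A` too, so `(w * a) ^ 2 = 1`, i.e. `w * a * w = a⁻¹`.
-/

namespace TwistedBicocycle

variable {G : Type*} [Group G] {A : Subgroup G}

def restrictCharacter (f : G → ℂ) (h1 : f 1 ≠ 0)
    (hmul : ∀ b ∈ A, ∀ c ∈ A, f (b * c) = f b * f c) : A →* ℂ where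
  toFun b := f b
  map_one' := mul_left_cancel₀ h1 (by simpa using (hmul 1 A.one_mem 1 A.one_mem).symm)
  map_mul' b c := hmul b b.2 c c.2

theorem norm_eq_one_of_mul_of_mem [Finite A] {f : G → ℂ} (h1 : f 1 ≠ 0)
    (hmul : ∀ b ∈ A, ∀ c ∈ A, f (b * c) = f b * f c) {b : G} (hb : b ∈ A) : ‖f b‖ = 1 :=
  ((restrictCharacter f h1 hmul).isOfFinOrder (isOfFinOrder_of_finite ⟨b, hb⟩)).norm_eq_one

theorem sq_eq_one_of_not_mem [Finite A] (hA : A.index = 2) {χ : G → G → ℂ}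
    (hne : ∀ x, χ x 1 ≠ 0) (hmul_right : ∀ x, ∀ b ∈ A, ∀ c ∈ A, χ x (b * c) = χ x b * χ x c)
    (hmul_left : ∀ a w c, w ∉ A → χ (a * w) c = starRingEnd ℂ (χ a c) * χ w c)
    (hnd : ∀ a ∈ A, (∀ b ∈ A, χ a b = 1) → a = 1) {w : G} (hw : w ∉ A) : w ^ 2 = 1 := by
  rw [sq]
  refine hnd _ (A.mul_self_mem_of_index_two hA w) fun c hc => ?_
  rw [hmul_left w w c hw, Complex.conj_mul', norm_eq_one_of_mul_of_mem (hne w) (hmul_right w) hc]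
  simp

theorem mul_mul_eq_inv_of_forall_sq_eq_one (hsq : ∀ w, w ∉ A → w ^ 2 = 1) {w a : G}
    (hw : w ∉ A) (ha : a ∈ A) : w * a * w = a⁻¹ := by
  have hwa : w * a ∉ A := fun h => hw ((A.mul_mem_cancel_right ha).1 h)
  exact eq_inv_of_mul_eq_one_left (by simpa [sq, mul_assoc] using hsq _ hwa)

end TwistedBicocycle

open TwistedBicocycle in
theorem twisted_bicocycle_forces_generalized_dihedral
    (G : Type*) [Group G] [Finite G] (A : Subgroup G) [DecidablePred (· ∈ A)]
    (hA : A.index = 2) (χ : G → G → ℂ) (hne : ∀ a b : G, χ a b ≠ 0)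
    (hcoc1 : ∀ a b c : G,
      χ a (b * c) = χ a b * (if b ∈ A then χ a c else (starRingEnd ℂ) (χ a c)))
    (hcoc2 : ∀ a b c : G,
      χ (a * b) c = (if b ∈ A then χ a c else (starRingEnd ℂ) (χ a c)) * χ b c)
    (hnd : ∀ a ∈ A, (∀ b ∈ A, χ a b = 1) → a = 1) :
    (∀ w : G, w ∉ A → w ^ 2 = 1) ∧
    (∀ w : G, w ∉ A → ∀ a ∈ A, w * a * w = a⁻¹) := by
  have hsq : ∀ w : G, w ∉ A → w ^ 2 = 1 := fun w hw =>
    sq_eq_one_of_not_mem hA (fun x => hne x 1)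
      (fun x b hb c _ => by simpa [hb] using hcoc1 x b c)
      (fun a w c hw => by simpa [hw] using hcoc2 a w c) hnd hw
  exact ⟨hsq, fun w hw a ha => mul_mul_eq_inv_of_forall_sq_eq_one hsq hw ha⟩
end

section
/- Let A be a finite abelian group, χ : A × A → ℝˣ a nondegenerate symmetric bicharacter, and τ = ±1/√(4|A|). Then for all a, b, d ∈ A: 4 · ∑_{c∈A} χ(c,b) · (τ/χ(c,d)) · (τ/χ(a,c)) = δ_{d, ba⁻¹}. -/
open Finset in
theorem quaternionic_pentagon_delta_identity
    (A : Type*) [CommGroup A] [Fintype A] [DecidableEq A] (χ : A → A → ℝˣ)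
    (hmul₁ : ∀ a b c : A, χ a (b * c) = χ a b * χ a c)
    (hmul₂ : ∀ a b c : A, χ (a * b) c = χ a c * χ b c)
    (hsymm : ∀ a b : A, χ a b = χ b a)
    (hnd : ∀ a : A, (∀ b : A, χ a b = 1) → a = 1)
    (τ : ℝ) (hτ : 4 * τ ^ 2 * (Fintype.card A : ℝ) = 1) :
    ∀ a b d : A,
      4 * ∑ c : A, (χ c b : ℝ) * (τ / (χ c d : ℝ)) * (τ / (χ a c : ℝ)) =
        if d = b * a⁻¹ then 1 else 0 := by
  -- basic facts
  have hone : ∀ a : A, χ a 1 = 1 := by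
    intro a
    have h := hmul₁ a 1 1
    rw [one_mul] at h
    exact (left_eq_mul.mp h)
  have hinv : ∀ a b : A, χ a b⁻¹ = (χ a b)⁻¹ := by
    intro a b
    have h := hmul₁ a b b⁻¹
    rw [mul_inv_cancel, hone] at h
    exact eq_inv_of_mul_eq_one_right h.symm
  -- orthogonality
  have hsum : ∀ x : A, ∑ c : A, (χ c x : ℝ) = if x = 1 then (Fintype.card A : ℝ) else 0 := by
    intro x
    by_cases hx : x = 1
    · subst hx
      simp [fun c => hone c]
    · simp only [if_neg hx]
      obtain ⟨c₀, hc₀⟩ : ∃ b : A, χ x b ≠ 1 := by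
        by_contra h
        push_neg at h
        exact hx (hnd x h)
      have key : (χ c₀ x : ℝ) * ∑ c : A, (χ c x : ℝ) = ∑ c : A, (χ c x : ℝ) := by
        rw [Finset.mul_sum]
        exact Fintype.sum_equiv (Equiv.mulLeft c₀) _ _ (by
          intro c
          rw [← Units.val_mul, ← hmul₂]
          rfl)
      have hne : (χ c₀ x : ℝ) ≠ 1 := by
        intro h
        exact hc₀ (by rw [hsymm]; exact Units.ext h)
      have := sub_eq_zero.mpr key
      rw [← sub_one_mul] at this
      rcases mul_eq_zero.mp this with h | h
      · exact absurd (by linarith [sub_eq_zero.mp h] : (χ c₀ x : ℝ) = 1) hne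
      · exact h
  intro a b d
  have hterm : ∀ c : A, (χ c b : ℝ) * (τ / (χ c d : ℝ)) * (τ / (χ a c : ℝ)) =
      τ ^ 2 * (χ c (b * d⁻¹ * a⁻¹) : ℝ) := by
    intro c
    rw [hmul₁, hmul₁, hinv, hinv]
    have h1 : (χ c d : ℝ) ≠ 0 := Units.ne_zero _
    have h2 : (χ c a : ℝ) ≠ 0 := Units.ne_zero _
    rw [hsymm a c]
    push_cast
    field_simp
  rw [Finset.sum_congr rfl (fun c _ => hterm c), ← Finset.mul_sum, hsum]
  have hiff : (b * d⁻¹ * a⁻¹ = 1) ↔ (d = b * a⁻¹) := by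
    rw [mul_right_comm, mul_inv_eq_one, eq_comm]
  by_cases hd : d = b * a⁻¹
  · rw [if_pos (hiff.mpr hd), if_pos hd, ← mul_assoc]
    linarith [hτ]
  · rw [if_neg (fun h => hd (hiff.mp h)), if_neg hd]
    ring
end

section
/- Let A be a finite abelian group and χ : A × A → ℂˣ a nondegenerate skew-symmetric bicharacter (χ(b,a) = χ(a,b)⁻¹ after conjugation convention: here take χ(b,a) = conj(χ(a,b))). Suppose functions β₂, γ : A × A → ℂˣ and τ ∈ ℝ satisfy β₂(a,b) = conj(χ(a,b)) = χ(b,a), γ(a,b) = χ(a,b)·γ(1,1), and δ_{d,ba⁻¹} = ∑_{c ∈ A} β₂(c,b)·conj(γ(c,d))·γ(a,c) for all a,b,d. Then γ(1,1)² · |A| = 1, i.e. γ(1,1) = ±1/√|A|. -/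
open Finset in
theorem galois_case_tau_squared
    (A : Type*) [CommGroup A] [Fintype A] [DecidableEq A] (χ : A → A → ℂ)
    (hne : ∀ a b : A, χ a b ≠ 0)
    (hmul₁ : ∀ a b c : A, χ a (b * c) = χ a b * χ a c)
    (hmul₂ : ∀ a b c : A, χ (a * b) c = χ a c * χ b c)
    (hskew : ∀ a b : A, χ b a = (starRingEnd ℂ) (χ a b))
    (hnd : ∀ a : A, (∀ b : A, χ a b = 1) → a = 1)
    (β₂ γ : A → A → ℂ)
    (hβ : ∀ a b : A, β₂ a b = (starRingEnd ℂ) (χ a b))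
    (hγ : ∀ a b : A, γ a b = χ a b * γ 1 1)
    (hreal : (γ 1 1).im = 0)
    (hdelta : ∀ a b d : A,
      ∑ c : A, β₂ c b * (starRingEnd ℂ) (γ c d) * γ a c =
        if d = b * a⁻¹ then 1 else 0) :
    (γ 1 1) ^ 2 * (Fintype.card A : ℂ) = 1 := by
  have hχ1 : ∀ c : A, χ c 1 = 1 := by
    intro c
    have := hmul₁ c 1 1
    rw [mul_one] at this
    have := mul_left_cancel₀ (hne c 1) (this.symm.trans (mul_one _).symm)
    exact this
  have hχ1' : ∀ c : A, χ 1 c = 1 := by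
    intro c
    have := hmul₂ 1 1 c
    rw [mul_one] at this
    have := mul_left_cancel₀ (hne 1 c) (this.symm.trans (mul_one _).symm)
    exact this
  have hconj : (starRingEnd ℂ) (γ 1 1) = γ 1 1 := Complex.conj_eq_iff_im.mpr hreal
  have h := hdelta 1 1 1
  simp only [mul_one, inv_one, if_pos rfl, if_true] at h
  have hterm : ∀ c : A, β₂ c 1 * (starRingEnd ℂ) (γ c 1) * γ 1 c = γ 1 1 ^ 2 := by
    intro c
    rw [hβ, hγ c 1, hγ 1 c, hχ1 c, hχ1' c, map_one, one_mul, one_mul, hconj]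
    ring
  rw [Finset.sum_congr rfl (fun c _ => hterm c), Finset.sum_const, Finset.card_univ,
    nsmul_eq_mul, mul_comm] at h
  exact h
end
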